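/- arXiv:2509.06379 — 3 statements merged into one kernel-verified Lean document; each statement's English description precedes it below -/
import Mathlib

section
/- The ring of Hahn series k[[t^Γ]] with coefficients in a field k and exponents in a linearly ordered abelian group Γ, equipped with the valuation sending a nonzero series to its minimal exponent, is spherically complete: every strictly nested family of closed valuation balls indexed by a well-ordered set has non-empty intersection. -/
/-- Membership in the closed valuation ball `B(y, w)` in the Hahn series ring:
`x ∈ B(y, w)` iff the valuation of `x - y` (the minimal exponent, with the
convention `ν 0 = ⊤`) is at least `w`. -/
def hahnBall {k : Type*} [Field k] {Γ : Type*} [AddCommGroup Γ] [LinearOrder Γ] [IsOrderedAddMonoid Γ]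
    (y : HahnSeries Γ k) (w : Γ) : Set (HahnSeries Γ k) :=
  {x | (w : WithTop Γ) ≤ (x - y).orderTop}

/-!
Two nested balls `B(y', w') ⊆ B(y, w)` have centres whose coefficients agree below `w`. Along a
chain of balls the centres are therefore pairwise compatible, and gluing their coefficients
(below each radius take those of the corresponding centre, elsewhere `0`) gives a series lying in
every ball. Its support is well-ordered because, below any of its points, it coincides with the
support of a single centre.
-/

theorem Set.isWF_of_inter_Iio_subset {α ι : Type*} [Preorder α] {s : Set α} {t : ι → Set α}
    {w : ι → α} (ht : ∀ i, (t i).IsWF) (hs : ∀ a ∈ s, ∃ i, a < w i)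
    (hst : ∀ i, s ∩ Set.Iio (w i) ⊆ t i) : s.IsWF := by
  rw [Set.isWF_iff_no_descending_seq]
  intro g hg hgs
  obtain ⟨i, hi⟩ := hs _ (hgs 0)
  have hgt : ∀ n, g n ∈ t i := fun n =>
    hst i ⟨hgs n, (hg.antitone (Nat.zero_le n)).trans_lt hi⟩
  exact (Set.isWF_iff_no_descending_seq.mp (ht i)) g hg hgt

namespace HahnSeries

variable {Γ R ι : Type*} [LinearOrder Γ] [Zero R]

open Classical in
noncomputable def glue (y : ι → HahnSeries Γ R) (w : ι → Γ)
    (hy : ∀ i j δ, δ < w i → δ < w j → (y i).coeff δ = (y j).coeff δ) : HahnSeries Γ R where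
  coeff δ := if h : ∃ i, δ < w i then (y h.choose).coeff δ else 0
  isPWO_support' := by
    refine Set.IsWF.isPWO (Set.isWF_of_inter_Iio_subset (w := w) (fun i => (y i).isWF_support)
      (fun δ hδ => ?_) (fun i δ ⟨hδ, hδi⟩ => ?_))
    · by_contra h
      exact hδ (dif_neg h)
    · have h : ∃ i, δ < w i := ⟨i, hδi⟩
      rwa [Function.mem_support, dif_pos h, hy _ i δ h.choose_spec hδi] at hδ

theorem coeff_glue {y : ι → HahnSeries Γ R} {w : ι → Γ}
    (hy : ∀ i j δ, δ < w i → δ < w j → (y i).coeff δ = (y j).coeff δ) {i : ι} {δ : Γ}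
    (hδ : δ < w i) : (glue y w hy).coeff δ = (y i).coeff δ := by
  have h : ∃ i, δ < w i := ⟨i, hδ⟩
  simp only [glue, dif_pos h]
  exact hy _ i δ h.choose_spec hδ

end HahnSeries

section Balls

variable {k Γ : Type*} [Field k] [AddCommGroup Γ] [LinearOrder Γ] [IsOrderedAddMonoid Γ]

theorem mem_hahnBall_iff {x y : HahnSeries Γ k} {w : Γ} :
    x ∈ hahnBall y w ↔ ∀ δ < w, x.coeff δ = y.coeff δ := by
  simp only [hahnBall, Set.mem_ofPred_eq, HahnSeries.le_orderTop_iff_forall, WithTop.coe_lt_coe,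
    HahnSeries.coeff_sub, sub_eq_zero]

theorem coeff_eq_of_hahnBall_subset {y y' : HahnSeries Γ k} {w w' : Γ}
    (h : hahnBall y' w' ⊆ hahnBall y w) {δ : Γ} (hδ : δ < w) : y'.coeff δ = y.coeff δ :=
  mem_hahnBall_iff.mp (h (mem_hahnBall_iff.mpr fun _ _ => rfl)) δ hδ

end Balls

theorem hahnSeries_spherically_complete_general
    {k : Type*} [Field k] {Γ : Type*} [AddCommGroup Γ] [LinearOrder Γ] [IsOrderedAddMonoid Γ]
    {T : Type*} [LinearOrder T]
    (y : T → HahnSeries Γ k) (w : T → Γ)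
    (hnested : ∀ τ τ' : T, τ < τ' → hahnBall (y τ') (w τ') ⊆ hahnBall (y τ) (w τ)) :
    ∃ z : HahnSeries Γ k, ∀ τ : T, z ∈ hahnBall (y τ) (w τ) := by
  have hchain : ∀ τ τ' : T, τ ≤ τ' → hahnBall (y τ') (w τ') ⊆ hahnBall (y τ) (w τ) := by
    intro τ τ' h
    rcases h.lt_or_eq with h | rfl
    exacts [hnested τ τ' h, subset_rfl]
  have hcompat : ∀ τ τ' δ, δ < w τ → δ < w τ' → (y τ).coeff δ = (y τ').coeff δ := by
    intro τ τ' δ hδ hδ'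
    rcases le_total τ τ' with h | h
    exacts [(coeff_eq_of_hahnBall_subset (hchain τ τ' h) hδ).symm,
      coeff_eq_of_hahnBall_subset (hchain τ' τ h) hδ']
  exact ⟨HahnSeries.glue y w hcompat, fun τ =>
    mem_hahnBall_iff.mpr fun _ hδ => HahnSeries.coeff_glue hcompat hδ⟩

/-- The Hahn series ring `k[[t^Γ]]` is spherically complete: every strictly nested
family of closed valuation balls indexed by a well-ordered set has non-empty
intersection. -/
theorem hahnSeries_spherically_complete
    {k : Type*} [Field k] {Γ : Type*} [AddCommGroup Γ] [LinearOrder Γ] [IsOrderedAddMonoid Γ]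
    {T : Type*} [LinearOrder T] [WellFoundedLT T]
    (y : T → HahnSeries Γ k) (w : T → Γ)
    (hnested : ∀ τ τ' : T, τ < τ' → hahnBall (y τ') (w τ') ⊆ hahnBall (y τ) (w τ))
    (hstrict : ∀ τ τ' : T, τ < τ' → hahnBall (y τ') (w τ') ≠ hahnBall (y τ) (w τ)) :
    ∃ z : HahnSeries Γ k, ∀ τ : T, z ∈ hahnBall (y τ) (w τ) :=
  hahnSeries_spherically_complete_general y w hnested
end

section
/- Let k be an algebraically closed field of characteristic p > 0 and let ζ = ∑_{i≥1} x^{1 - 1/p^i}, an element of the Hahn series field k[[x^Q]] with exponents in the rationals. Then ζ satisfies the Artin–Schreier equation ζ^p - x^{p-1}(1 + ζ) = 0. -/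
/-!
Write `ζₙ = ∑_{i ≥ n} x^{1 - 1/pⁱ}`, so that `ζ₀ = 1 + ζ` and `ζ₁ = ζ`. Since
`ζₙ = x^{1 - 1/pⁿ} + ζₙ₊₁`, Frobenius is additive and `(x^{1 - 1/pⁿ⁺¹})^p = x^{p-1} x^{1 - 1/pⁿ}`,
the defect `ζₙ₊₁^p - x^{p-1} ζₙ` does not depend on `n`. It is supported in `[p - 1/pⁿ, p)`,
and these intervals have empty intersection, so the defect vanishes.
-/

open HahnSeries Set

namespace HahnSeries

variable {Γ R : Type*} [AddCommMonoid Γ] [PartialOrder Γ] [IsOrderedCancelAddMonoid Γ]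

instance charP [CommRing R] (p : ℕ) [CharP R p] : CharP (HahnSeries Γ R) p :=
  charP_of_injective_ringHom C_injective p

variable [Semiring R] {x : HahnSeries Γ R} {a b : Γ}

theorem support_single_mul_subset_Ico (g : Γ) (r : R) (hx : x.support ⊆ Ico a b) :
    (single g r * x).support ⊆ Ico (g + a) (g + b) :=
  support_mul_subset.trans <|
    (add_subset_add (support_single_subset.trans (Icc_self g).symm.subset) hx).trans
      (Icc_add_Ico_subset ..)

theorem support_pow_subset_Ico (hx : x.support ⊆ Ico a b) {n : ℕ} (hn : n ≠ 0) :
    (x ^ n).support ⊆ Ico (n • a) (n • b) := by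
  induction n with
  | zero => exact absurd rfl hn
  | succ n ih =>
    rcases eq_or_ne n 0 with rfl | hn
    · simpa using hx
    · rw [pow_succ', succ_nsmul', succ_nsmul']
      exact support_mul_subset.trans <|
        (add_subset_add (hx.trans Ico_subset_Icc_self) (ih hn)).trans (Icc_add_Ico_subset ..)

end HahnSeries

namespace ArtinSchreierRoot

def exponent (p i : ℕ) : ℚ := 1 - 1 / (p : ℚ) ^ i

variable {p : ℕ}

@[simp]
theorem exponent_zero : exponent p 0 = 0 := by
  simp [exponent]

theorem exponent_monotone (p : ℕ) : Monotone (exponent p) := by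
  intro i j hij
  rcases Nat.eq_zero_or_pos p with rfl | hp
  · rcases i with _ | i <;> rcases j with _ | j <;> simp [exponent] at hij ⊢
  · have : (1 : ℚ) ≤ p := by exact_mod_cast hp
    simp only [exponent]
    linarith [one_div_pow_le_one_div_pow_of_le this hij]

theorem exponent_strictMono (hp : 1 < p) : StrictMono (exponent p) := by
  intro i j hij
  have : (1 : ℚ) < p := by exact_mod_cast hp
  simp only [exponent]
  linarith [one_div_pow_lt_one_div_pow_of_lt this hij]

theorem exponent_lt_one (hp : p ≠ 0) (i : ℕ) : exponent p i < 1 := by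
  have : (0 : ℚ) < 1 / (p : ℚ) ^ i := by positivity
  simp only [exponent]
  linarith

theorem natCast_mul_exponent_succ (hp : p ≠ 0) (i : ℕ) :
    p * exponent p (i + 1) = p - 1 + exponent p i := by
  simp only [exponent]
  field_simp
  ring

theorem exists_notMem_Ico_exponent (hp : 1 < p) (q : ℚ) :
    ∃ n, q ∉ Ico ((p : ℚ) - 1 + exponent p n) p := by
  by_cases hq : (p : ℚ) ≤ q
  · exact ⟨0, fun h => hq.not_gt h.2⟩
  · have hp' : (1 : ℚ) < p := by exact_mod_cast hp
    obtain ⟨n, hn⟩ := exists_pow_lt_of_lt_one (sub_pos.2 (not_le.1 hq))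
      ((div_lt_one (by positivity)).2 hp')
    refine ⟨n, fun h => ?_⟩
    rw [div_pow, one_pow] at hn
    simp only [exponent] at h
    linarith [h.1]

theorem mem_image_exponent_Ici_one {q : ℚ} :
    q ∈ exponent p '' Ici 1 ↔ ∃ i : ℕ, q = 1 - 1 / (p : ℚ) ^ (i + 1) := by
  constructor
  · rintro ⟨_ | i, hi, rfl⟩
    · exact absurd hi (by simp)
    · exact ⟨i, rfl⟩
  · rintro ⟨i, rfl⟩
    exact ⟨i + 1, Nat.le_add_left 1 i, rfl⟩

variable {k : Type*}

variable (k) in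
noncomputable def tail [Zero k] [One k] (p n : ℕ) : HahnSeries ℚ k where
  coeff := (exponent p '' Ici n).indicator 1
  isPWO_support' :=
    ((IsPWO.of_linearOrder _).image_of_monotone (exponent_monotone p)).mono
      support_indicator_subset

theorem coeff_tail [Zero k] [One k] (n : ℕ) (q : ℚ) :
    (tail k p n).coeff q = (exponent p '' Ici n).indicator 1 q :=
  rfl

theorem support_tail_subset [Zero k] [One k] (hp : p ≠ 0) (n : ℕ) :
    (tail k p n).support ⊆ Ico (exponent p n) 1 := by
  rintro _ hq
  obtain ⟨i, hi, rfl⟩ := support_indicator_subset hq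
  exact ⟨exponent_monotone p hi, exponent_lt_one hp i⟩

theorem tail_eq_single_add [Semiring k] (hp : 1 < p) (n : ℕ) :
    tail k p n = single (exponent p n) 1 + tail k p (n + 1) := by
  ext q
  simp only [coeff_add, coeff_tail, coeff_single]
  by_cases hq : q = exponent p n
  · subst hq
    rw [indicator_of_mem (mem_image_of_mem _ self_mem_Ici), if_pos rfl,
      indicator_of_notMem, Pi.one_apply, add_zero]
    rintro ⟨i, hi, hin⟩
    exact (exponent_strictMono hp hi).ne' hin
  · have hmem : q ∈ exponent p '' Ici n ↔ q ∈ exponent p '' Ici (n + 1) := by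
      constructor
      · rintro ⟨i, hi, rfl⟩
        exact ⟨i, lt_of_le_of_ne hi fun h => hq (congrArg _ h.symm), rfl⟩
      · rintro ⟨i, hi, rfl⟩
        exact ⟨i, (Nat.le_succ n).trans hi, rfl⟩
    rw [if_neg hq, zero_add]
    by_cases h : q ∈ exponent p '' Ici (n + 1)
    · rw [indicator_of_mem h, indicator_of_mem (hmem.2 h)]
    · rw [indicator_of_notMem h, indicator_of_notMem (mt hmem.1 h)]

variable (k) in
noncomputable def defect [Ring k] (p n : ℕ) : HahnSeries ℚ k :=
  tail k p (n + 1) ^ p - single ((p : ℚ) - 1) 1 * tail k p n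

theorem support_defect_subset [Ring k] [Fact p.Prime] (n : ℕ) :
    (defect k p n).support ⊆ Ico ((p : ℚ) - 1 + exponent p n) p := by
  have hp := (Fact.out : p.Prime)
  refine (support_sub_subset _ _).trans (union_subset ?_ ?_)
  · have := support_pow_subset_Ico (support_tail_subset (k := k) hp.ne_zero (n + 1)) hp.ne_zero
    rwa [nsmul_eq_mul, nsmul_eq_mul, natCast_mul_exponent_succ hp.ne_zero, mul_one] at this
  · simpa using
      support_single_mul_subset_Ico ((p : ℚ) - 1) (1 : k) (support_tail_subset hp.ne_zero n)

variable [CommRing k] [Fact p.Prime] [CharP k p]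

theorem defect_succ (n : ℕ) : defect k p (n + 1) = defect k p n := by
  have hp := (Fact.out : p.Prime)
  have key : single (exponent p (n + 1)) (1 : k) ^ p =
      single ((p : ℚ) - 1) 1 * single (exponent p n) 1 := by
    rw [single_pow, single_mul_single, nsmul_eq_mul, natCast_mul_exponent_succ hp.ne_zero,
      one_pow, one_mul]
  rw [defect, defect, tail_eq_single_add hp.one_lt n, tail_eq_single_add hp.one_lt (n + 1),
    add_pow_char]
  linear_combination -key

theorem defect_zero : defect k p 0 = 0 := by
  have h_const (n : ℕ) : defect k p n = defect k p 0 := by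
    induction n with
    | zero => rfl
    | succ n ih => rw [defect_succ, ih]
  ext q
  obtain ⟨n, hq⟩ := exists_notMem_Ico_exponent (Fact.out : p.Prime).one_lt q
  rw [← h_const n, coeff_zero]
  by_contra h
  exact hq (support_defect_subset n ((mem_support _ _).2 h))

end ArtinSchreierRoot

open ArtinSchreierRoot

theorem artinSchreier_hahnSeries_root_general
    {k : Type*} [Field k] (p : ℕ) [hp : Fact p.Prime] [CharP k p]
    (ζ : HahnSeries ℚ k)
    (hζ1 : ∀ q : ℚ, (∃ i : ℕ, q = 1 - (1 : ℚ) / (p : ℚ) ^ (i + 1)) → ζ.coeff q = 1)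
    (hζ0 : ∀ q : ℚ, (¬ ∃ i : ℕ, q = 1 - (1 : ℚ) / (p : ℚ) ^ (i + 1)) → ζ.coeff q = 0) :
    ζ ^ p - HahnSeries.single ((p : ℚ) - 1) (1 : k) * (1 + ζ) = 0 := by
  have hζ : ζ = tail k p 1 := by
    classical
    ext q
    rw [coeff_tail, indicator_apply, Pi.one_apply, mem_image_exponent_Ici_one]
    split_ifs with hq
    · exact hζ1 q hq
    · exact hζ0 q hq
  have h_one_add : 1 + ζ = tail k p 0 := by
    rw [tail_eq_single_add hp.out.one_lt, hζ, exponent_zero, single_zero_one]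
  rw [h_one_add, hζ]
  exact defect_zero

/-- Let `k` be an algebraically closed field of characteristic `p > 0` and let
`ζ = ∑_{i ≥ 1} x^{1 - 1/pⁱ}` in the Hahn series field `k[[x^ℚ]]` (the Hahn series
with coefficient `1` at each exponent `1 - 1/pⁱ`, `i ≥ 1`, and `0` elsewhere).
Then `ζ` satisfies the Artin–Schreier equation `ζ^p - x^{p-1} (1 + ζ) = 0`. -/
theorem artinSchreier_hahnSeries_root
    {k : Type*} [Field k] [IsAlgClosed k] (p : ℕ) [hp : Fact p.Prime] [CharP k p]
    (ζ : HahnSeries ℚ k)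
    (hζ1 : ∀ q : ℚ, (∃ i : ℕ, q = 1 - (1 : ℚ) / (p : ℚ) ^ (i + 1)) → ζ.coeff q = 1)
    (hζ0 : ∀ q : ℚ, (¬ ∃ i : ℕ, q = 1 - (1 : ℚ) / (p : ℚ) ^ (i + 1)) → ζ.coeff q = 0) :
    ζ ^ p - HahnSeries.single ((p : ℚ) - 1) (1 : k) * (1 + ζ) = 0 :=
  artinSchreier_hahnSeries_root_general p (hp := hp) ζ hζ1 hζ0
end

section
/- Let Φ = ℤ + ℤπ ⊆ ℝ (with π irrational) ordered by the real order, and let u : Φ → k[[t^{Φ≥0}]]^× be the group homomorphism with u(1) = (1+t^π)^n for a fixed integer n and u(π) = 1, where k is a field. Then for every Hahn series ∑_{r,s} c_{r,s} t^{r+sπ} ∈ k[[t^{Φ≥0}]], the series ∑_{r,s} c_{r,s} (1+t^π)^{nr} t^{r+sπ} is again an element of k[[t^{Φ≥0}]], i.e., its support is well-ordered. -/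
/-!
Every `(1 + t^π)^m`, `m ∈ ℤ`, is supported in the monoid `ℕπ`: for `m < 0` it is a power of the
geometric series `∑ (-t^π)^j`. So the `x`-th term of the twisted series is supported in `x + ℕπ`.
As `supp f` and `ℕπ` are well-ordered, so is `ℕπ + supp f`, and each exponent has only finitely
many decompositions `s + x` in it; this is exactly summability of the family. Its sum is supported
in `ℕπ + supp f ⊆ Φ≥0`.
-/

open scoped Pointwise

namespace HahnSeries

section SupportedIn

variable {Γ R : Type*} [AddCommMonoid Γ] [PartialOrder Γ] [IsOrderedCancelAddMonoid Γ] [Ring R]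

def supportedIn (S : AddSubmonoid Γ) : Subring R⟦Γ⟧ where
  carrier := {x | x.support ⊆ S}
  one_mem' := by
    rw [Set.mem_ofPred_eq, ← single_zero_one]
    exact support_single_subset.trans (Set.singleton_subset_iff.2 S.zero_mem)
  add_mem' hx hy := (support_add_subset _ _).trans (Set.union_subset hx hy)
  zero_mem' := by simp
  neg_mem' hx := support_neg.trans_subset hx
  mul_mem' hx hy := support_mul_subset.trans (AddSubmonoid.add_subset hx hy)

theorem mem_supportedIn {S : AddSubmonoid Γ} {x : R⟦Γ⟧} :
    x ∈ supportedIn S ↔ x.support ⊆ S := Iff.rfl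

end SupportedIn

section Inverse

variable {Γ k : Type*} [AddCommGroup Γ] [LinearOrder Γ] [IsOrderedAddMonoid Γ] [Field k]
  {S : AddSubmonoid Γ} {x : k⟦Γ⟧}

theorem inv_one_sub_mem_supportedIn (hx : 0 < x.orderTop) (hxS : x ∈ supportedIn S) :
    (1 - x)⁻¹ ∈ supportedIn S := by
  rw [inv_eq_of_mul_eq_one_right (SummableFamily.one_sub_self_mul_hsum_powers hx),
    mem_supportedIn]
  refine SummableFamily.support_hsum_subset.trans (Set.iUnion_subset fun j => ?_)
  rw [SummableFamily.powers_of_orderTop_pos hx]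
  exact pow_mem hxS j

theorem one_add_zpow_mem_supportedIn (hx : 0 < x.orderTop) (hxS : x ∈ supportedIn S) (m : ℤ) :
    (1 + x) ^ m ∈ supportedIn S := by
  cases m with
  | ofNat j => simpa using pow_mem (add_mem (one_mem _) hxS) j
  | negSucc j =>
    rw [zpow_negSucc, ← inv_pow, ← sub_neg_eq_add]
    exact pow_mem (inv_one_sub_mem_supportedIn (by rwa [orderTop_neg]) (neg_mem hxS)) _

end Inverse

section Twist

variable {Γ R : Type*} [AddCommMonoid Γ] [PartialOrder Γ] [IsOrderedCancelAddMonoid Γ] [Semiring R]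

theorem support_coeff_smul_mul_single_subset (f g : R⟦Γ⟧) (x : Γ) :
    (f.coeff x • (g * single x 1)).support ⊆
      {a | x ∈ f.support ∧ ∃ s ∈ g.support, s + x = a} := by
  intro a ha
  have hx : f.coeff x ≠ 0 := by
    rintro h
    simp [h] at ha
  obtain ⟨s, hs, y, hy, rfl⟩ := support_mul_subset (support_smul_subset _ _ ha)
  obtain rfl : y = x := support_single_subset hy
  exact ⟨hx, s, hs, rfl⟩

variable {S : Set Γ}

noncomputable def SummableFamily.twist (f : R⟦Γ⟧) (hS : S.IsPWO) (g : Γ → R⟦Γ⟧)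
    (hg : ∀ x, (g x).support ⊆ S) : SummableFamily Γ R Γ where
  toFun x := f.coeff x • (g x * HahnSeries.single x 1)
  isPWO_iUnion_support' := by
    refine (hS.add f.isPWO_support).mono (Set.iUnion_subset fun x => ?_)
    refine (support_coeff_smul_mul_single_subset f (g x) x).trans ?_
    rintro _ ⟨hx, s, hs, rfl⟩
    exact Set.add_mem_add (hg x hs) hx
  finite_co_support' a := by
    refine ((Set.AddAntidiagonal.finite_of_isPWO hS f.isPWO_support a).image Prod.snd).subset ?_
    intro x hx
    obtain ⟨hxf, s, hs, hsx⟩ := support_coeff_smul_mul_single_subset f (g x) x hx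
    exact ⟨(s, x), ⟨hg x hs, hxf, hsx⟩, rfl⟩

theorem SummableFamily.support_hsum_twist_subset (f : R⟦Γ⟧) (hS : S.IsPWO) (g : Γ → R⟦Γ⟧)
    (hg : ∀ x, (g x).support ⊆ S) : (twist f hS g hg).hsum.support ⊆ S + f.support := by
  refine support_hsum_subset.trans (Set.iUnion_subset fun x => ?_)
  refine (support_coeff_smul_mul_single_subset f (g x) x).trans ?_
  rintro _ ⟨hx, s, hs, rfl⟩
  exact Set.add_mem_add (hg x hs) hx

end Twist

end HahnSeries

def nonnegIntSpanOneAnd (π : ℝ) : AddSubmonoid ℝ where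
  carrier := {x : ℝ | (∃ r s : ℤ, x = (r : ℝ) + (s : ℝ) * π) ∧ 0 ≤ x}
  zero_mem' := ⟨⟨0, 0, by simp⟩, le_rfl⟩
  add_mem' := by
    rintro _ _ ⟨⟨r, s, rfl⟩, hx⟩ ⟨⟨r', s', rfl⟩, hy⟩
    exact ⟨⟨r + r', s + s', by push_cast; ring⟩, add_nonneg hx hy⟩

open HahnSeries in
theorem twist_by_unit_preserves_hahn_general
    {k : Type*} [Field k] (π : ℝ) (hπ : 0 < π) (n : ℤ)
    (f : HahnSeries ℝ k)
    (hsupp : f.support ⊆ {x : ℝ | (∃ r s : ℤ, x = (r : ℝ) + (s : ℝ) * π) ∧ 0 ≤ x})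
    (rr : ℝ → ℤ) :
    ∃ F : HahnSeries.SummableFamily ℝ k ℝ,
      (∀ x : ℝ, F x =
        f.coeff x • ((1 + HahnSeries.single π (1 : k)) ^ (n * rr x) *
          HahnSeries.single x (1 : k))) ∧
      F.hsum.support ⊆ {x : ℝ | (∃ r s : ℤ, x = (r : ℝ) + (s : ℝ) * π) ∧ 0 ≤ x} := by
  set S := AddSubmonoid.closure {π}
  have hS : (S : Set ℝ).IsPWO :=
    (Set.isPWO_singleton π).addSubmonoid_closure (by simpa using hπ.le)
  have hunit (x : ℝ) : ((1 + single π (1 : k)) ^ (n * rr x)).support ⊆ S := by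
    refine one_add_zpow_mem_supportedIn ?_ ?_ _
    · exact (orderTop_single one_ne_zero).trans_gt (WithTop.coe_pos.2 hπ)
    · exact support_single_subset.trans
        (Set.singleton_subset_iff.2 (AddSubmonoid.subset_closure rfl))
  have hπS : S ≤ nonnegIntSpanOneAnd π :=
    AddSubmonoid.closure_le.2 (Set.singleton_subset_iff.2 ⟨⟨0, 1, by simp⟩, hπ.le⟩)
  refine ⟨SummableFamily.twist f hS _ hunit, fun x => rfl, ?_⟩
  exact (SummableFamily.support_hsum_twist_subset f hS _ hunit).trans
    (AddSubmonoid.add_subset hπS hsupp)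

/-- Let `Φ = ℤ + ℤπ ⊆ ℝ` (`π` irrational, positive) with the real order, `k` a
field, and `n` a fixed integer, corresponding to the homomorphism
`u : Φ → k[[t^{Φ≥0}]]ˣ` with `u 1 = (1+t^π)^n`, `u π = 1`.  For every Hahn series
`f = ∑_{r,s} c_{r,s} t^{r+sπ}` with support in `Φ_{≥0}` (decomposed by `rr`, `ss`),
the family of series `c_{r,s} (1+t^π)^{nr} t^{r+sπ}` is summable, and its sum
`∑_{r,s} c_{r,s} (1+t^π)^{nr} t^{r+sπ}` is again an element of `k[[t^{Φ≥0}]]`: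
in particular its support is well-ordered and lies in `Φ_{≥0}`. -/
theorem twist_by_unit_preserves_hahn
    {k : Type*} [Field k] (π : ℝ) (hirr : Irrational π) (hπ : 0 < π) (n : ℤ)
    (f : HahnSeries ℝ k)
    (hsupp : f.support ⊆ {x : ℝ | (∃ r s : ℤ, x = (r : ℝ) + (s : ℝ) * π) ∧ 0 ≤ x})
    (rr ss : ℝ → ℤ)
    (hdec : ∀ x ∈ f.support, x = (rr x : ℝ) + (ss x : ℝ) * π) :
    ∃ F : HahnSeries.SummableFamily ℝ k ℝ,
      (∀ x : ℝ, F x =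
        f.coeff x • ((1 + HahnSeries.single π (1 : k)) ^ (n * rr x) *
          HahnSeries.single x (1 : k))) ∧
      F.hsum.support ⊆ {x : ℝ | (∃ r s : ℤ, x = (r : ℝ) + (s : ℝ) * π) ∧ 0 ≤ x} :=
  twist_by_unit_preserves_hahn_general π hπ n f hsupp rr
end
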